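/- arXiv:1811.10866 — 5 statements merged into one kernel-verified Lean document; each statement's English description precedes it below -/
import Mathlib

section
/- For a vector a in R^d with numerical sparsity s(a) = ||a||_1^2 / ||a||_2^2, and any c in {1,...,d}, the sum of squares of all but the c largest-magnitude coordinates of a is at most ||a||_2^2 * s(a) / c. -/
open Finset

/-- Numerical sparsity lemma: the squared ℓ₂-mass outside the `c` largest-magnitude
coordinates of `a` is at most `‖a‖₂² · s(a) / c` where `s(a) = ‖a‖₁²/‖a‖₂²`. -/
theorem stmt_0 {d : ℕ} (a : Fin d → ℝ) (ha : a ≠ 0) (c : ℕ) (hc1 : 1 ≤ c) (hcd : c ≤ d)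
    (T : Finset (Fin d)) (hT : T.card = c)
    (htop : ∀ i ∈ T, ∀ j ∉ T, |a j| ≤ |a i|) :
    ∑ j ∈ Tᶜ, (a j) ^ 2 ≤
      (∑ i, (a i) ^ 2) * ((∑ i, |a i|) ^ 2 / ∑ i, (a i) ^ 2) / c := by
  set S1 := ∑ i, |a i| with hS1
  set S2 := ∑ i, (a i) ^ 2 with hS2
  have hS2pos : 0 < S2 := by
    obtain ⟨i, hi⟩ : ∃ i, a i ≠ 0 := by
      by_contra h
      push_neg at h
      exact ha (funext h)
    exact Finset.sum_pos' (fun j _ => sq_nonneg _)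
      ⟨i, Finset.mem_univ i, by positivity⟩
  have hrhs : S2 * (S1 ^ 2 / S2) / c = S1 ^ 2 / c := by
    field_simp
  rw [hrhs]
  have hTne : T.Nonempty := Finset.card_pos.mp (by omega)
  obtain ⟨i₀, hi₀T, hi₀min⟩ := Finset.exists_min_image T (fun i => |a i|) hTne
  have hm_nonneg : 0 ≤ |a i₀| := abs_nonneg _
  -- bound 1: sum over Tᶜ of squares ≤ |a i₀| * S1
  have h1 : ∑ j ∈ Tᶜ, (a j) ^ 2 ≤ |a i₀| * S1 := by
    calc ∑ j ∈ Tᶜ, (a j) ^ 2 ≤ ∑ j ∈ Tᶜ, |a i₀| * |a j| := by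
          apply Finset.sum_le_sum
          intro j hj
          have hjT : j ∉ T := Finset.mem_compl.mp hj
          have := htop i₀ hi₀T j hjT
          calc (a j) ^ 2 = |a j| * |a j| := by rw [← sq_abs]; ring
            _ ≤ |a i₀| * |a j| := by
                apply mul_le_mul_of_nonneg_right this (abs_nonneg _)
      _ = |a i₀| * ∑ j ∈ Tᶜ, |a j| := by rw [Finset.mul_sum]
      _ ≤ |a i₀| * S1 := by
          apply mul_le_mul_of_nonneg_left _ hm_nonneg
          exact Finset.sum_le_sum_of_subset_of_nonneg (Finset.subset_univ _)
            (fun i _ _ => abs_nonneg _)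
  -- bound 2: c * |a i₀| ≤ S1
  have h2 : (c : ℝ) * |a i₀| ≤ S1 := by
    calc (c : ℝ) * |a i₀| = ∑ _i ∈ T, |a i₀| := by
          rw [Finset.sum_const, hT, nsmul_eq_mul]
      _ ≤ ∑ i ∈ T, |a i| := Finset.sum_le_sum (fun i hi => hi₀min i hi)
      _ ≤ S1 := Finset.sum_le_sum_of_subset_of_nonneg (Finset.subset_univ _)
            (fun i _ _ => abs_nonneg _)
  have hcpos : (0 : ℝ) < c := by exact_mod_cast hc1
  have hS1nonneg : 0 ≤ S1 := Finset.sum_nonneg (fun i _ => abs_nonneg _)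
  rw [div_eq_mul_inv, pow_two]
  calc ∑ j ∈ Tᶜ, (a j) ^ 2 ≤ |a i₀| * S1 := h1
    _ ≤ (S1 / c) * S1 := by
        apply mul_le_mul_of_nonneg_right _ hS1nonneg
        rw [le_div_iff₀ hcpos]
        linarith [h2]
    _ = S1 * S1 * (c : ℝ)⁻¹ := by ring
end

section
/- Let X_1,...,X_c be i.i.d. random vectors in R^d where X equals (a_j / p_j) e_j with probability p_j = |a_j| / ||a||_1 for each j in [d] (a ≠ 0). Then the estimator â = (1/c) Σ_t X_t satisfies E[â] = a and E[||â||_2^2] ≤ ||a||_2^2 (1 + s(a)/c), where s(a) = ||a||_1^2/||a||_2^2. -/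
/-!
A single sample has `E[X_i] = p_i · a_i / p_i = a_i` and
`E[X_i²] = a_i² / p_i = |a_i| ‖a‖₁`. Since variances of pairwise independent variables add,
the average of `c` samples has `E[â_i²] = a_i² + (|a_i| ‖a‖₁ - a_i²) / c`; summing over `i`
gives `E[‖â‖₂²] = ‖a‖₂² + (‖a‖₁² - ‖a‖₂²) / c ≤ ‖a‖₂² (1 + s(a) / c)`.
-/

open MeasureTheory ProbabilityTheory Finset

section Moments

variable {Ω : Type*} [MeasurableSpace Ω] {μ : Measure Ω}

theorem integral_comp_eq_sum_of_measure_preimage_singleton [IsFiniteMeasure μ]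
    {α : Type*} [Fintype α] [MeasurableSpace α] [MeasurableSingletonClass α]
    {J : Ω → α} (hJ : Measurable J) {p : α → ℝ} (hp : ∀ j, 0 ≤ p j)
    (hlaw : ∀ j, μ (J ⁻¹' {j}) = ENNReal.ofReal (p j)) (f : α → ℝ) :
    ∫ ω, f (J ω) ∂μ = ∑ j, p j * f j := by
  rw [← integral_map hJ.aemeasurable Measurable.of_discrete.aestronglyMeasurable,
    integral_fintype Integrable.of_finite]
  refine sum_congr rfl fun j _ => ?_
  rw [map_measureReal_apply hJ (measurableSet_singleton j), measureReal_def, smul_eq_mul,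
    hlaw j, ENNReal.toReal_ofReal (hp j)]

variable {ι : Type*} [Fintype ι] {Y : ι → Ω → ℝ} {m q : ℝ}

theorem integral_avg_of_integral_eq [Nonempty ι] (hY : ∀ t, Integrable (Y t) μ)
    (hm : ∀ t, ∫ ω, Y t ω ∂μ = m) :
    ∫ ω, 1 / (Fintype.card ι : ℝ) * ∑ t, Y t ω ∂μ = m := by
  rw [integral_const_mul, integral_finsetSum _ fun t _ => hY t]
  simp [hm]

theorem integral_sq_sum_of_pairwise_indepFun [IsProbabilityMeasure μ]
    (hY : ∀ t, MemLp (Y t) 2 μ) (hindep : Pairwise fun t s => IndepFun (Y t) (Y s) μ)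
    (hm : ∀ t, ∫ ω, Y t ω ∂μ = m) (hq : ∀ t, ∫ ω, Y t ω ^ 2 ∂μ = q) :
    ∫ ω, (∑ t, Y t ω) ^ 2 ∂μ =
      Fintype.card ι * q + ((Fintype.card ι : ℝ) ^ 2 - Fintype.card ι) * m ^ 2 := by
  have hvar_sum : variance (∑ t, Y t) μ = ∑ t, variance (Y t) μ :=
    IndepFun.variance_sum (fun t _ => hY t) fun t _ s _ hts => hindep hts
  have hvar : ∀ t, variance (Y t) μ = q - m ^ 2 := fun t => by
    rw [variance_eq_sub (hY t), ← hm t, ← hq t]; rfl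
  have hmean : ∫ ω, ∑ t, Y t ω ∂μ = Fintype.card ι * m := by
    simp [integral_finsetSum _ fun t _ => (hY t).integrable one_le_two, hm]
  rw [variance_eq_sub (memLp_finsetSum' _ fun t _ => hY t)] at hvar_sum
  simp only [hvar, sum_const, card_univ, nsmul_eq_mul, Finset.sum_apply, Pi.pow_apply,
    hmean] at hvar_sum
  linear_combination hvar_sum

theorem integral_avg_sq_of_pairwise_indepFun [IsProbabilityMeasure μ] [Nonempty ι]
    (hY : ∀ t, MemLp (Y t) 2 μ) (hindep : Pairwise fun t s => IndepFun (Y t) (Y s) μ)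
    (hm : ∀ t, ∫ ω, Y t ω ∂μ = m) (hq : ∀ t, ∫ ω, Y t ω ^ 2 ∂μ = q) :
    ∫ ω, (1 / (Fintype.card ι : ℝ) * ∑ t, Y t ω) ^ 2 ∂μ =
      m ^ 2 + (q - m ^ 2) / Fintype.card ι := by
  simp_rw [mul_pow]
  rw [integral_const_mul, integral_sq_sum_of_pairwise_indepFun hY hindep hm hq]
  have : (Fintype.card ι : ℝ) ≠ 0 := Nat.cast_ne_zero.2 Fintype.card_ne_zero
  field_simp
  ring

end Moments

section ImportanceSampling

variable {ι : Type*} [Fintype ι]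

noncomputable def samplingProb (a : ι → ℝ) (j : ι) : ℝ :=
  |a j| / ∑ k, |a k|

-- The rescaled basis vector `(a_j / p_j) e_j`; if `a_j = 0` then `p_j = 0`, `j` is never drawn,
-- and the entry is `0` by the convention `x / 0 = 0`.
noncomputable def importanceSample [DecidableEq ι] (a : ι → ℝ) (j : ι) : ι → ℝ :=
  Pi.single j (a j / samplingProb a j)

variable (a : ι → ℝ) (j : ι)

theorem importanceSample_apply [DecidableEq ι] (i : ι) :
    importanceSample a j i = if j = i then a i / samplingProb a i else 0 := by
  by_cases h : j = i <;> simp [importanceSample, h]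

theorem sum_abs_pos {a : ι → ℝ} {j : ι} (h : a j ≠ 0) : 0 < ∑ k, |a k| :=
  (abs_pos.2 h).trans_le (single_le_sum (fun k _ => abs_nonneg (a k)) (mem_univ j))

theorem samplingProb_nonneg : 0 ≤ samplingProb a j := by
  unfold samplingProb; positivity

theorem samplingProb_mul_div_samplingProb :
    samplingProb a j * (a j / samplingProb a j) = a j := by
  by_cases h : a j = 0
  · simp [h]
  · exact mul_div_cancel₀ _ (div_pos (abs_pos.2 h) (sum_abs_pos h)).ne'

theorem samplingProb_mul_div_samplingProb_sq :
    samplingProb a j * (a j / samplingProb a j) ^ 2 = |a j| * ∑ k, |a k| := by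
  by_cases h : a j = 0
  · simp [h]
  · have := abs_pos.2 h
    have := sum_abs_pos h
    rw [div_pow, ← sq_abs, samplingProb]
    field_simp

theorem sum_second_moment_le {a : ι → ℝ} (ha : a ≠ 0) {c : ℝ} (hc : 0 ≤ c) :
    ∑ i, (a i ^ 2 + (|a i| * ∑ k, |a k| - a i ^ 2) / c) ≤
      (∑ i, a i ^ 2) * (1 + ((∑ i, |a i|) ^ 2 / ∑ i, a i ^ 2) / c) := by
  set S := ∑ k, |a k|
  set Q := ∑ i, a i ^ 2
  have hQ : 0 < Q := by
    obtain ⟨j, hj⟩ := Function.ne_iff.1 ha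
    replace hj : a j ≠ 0 := hj
    exact sum_pos' (fun i _ => sq_nonneg _) ⟨j, mem_univ j, by positivity⟩
  calc ∑ i, (a i ^ 2 + (|a i| * S - a i ^ 2) / c) = Q + (S ^ 2 - Q) / c := by
        rw [sum_add_distrib, ← sum_div, sum_sub_distrib, ← sum_mul, sq]
    _ ≤ Q + S ^ 2 / c := by gcongr; linarith
    _ = Q * (1 + (S ^ 2 / Q) / c) := by field_simp

variable [DecidableEq ι] {Ω : Type*} [MeasurableSpace Ω] {μ : Measure Ω} [IsFiniteMeasure μ]
  [MeasurableSpace ι] [DiscreteMeasurableSpace ι] {J : Ω → ι}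

theorem integral_importanceSample_apply (hJ : Measurable J)
    (hlaw : ∀ j, μ (J ⁻¹' {j}) = ENNReal.ofReal (samplingProb a j)) (i : ι) :
    ∫ ω, importanceSample a (J ω) i ∂μ = a i := by
  rw [integral_comp_eq_sum_of_measure_preimage_singleton hJ (samplingProb_nonneg a) hlaw
    fun j => importanceSample a j i]
  simp [importanceSample, Pi.single_apply, samplingProb_mul_div_samplingProb]

theorem integral_importanceSample_apply_sq (hJ : Measurable J)
    (hlaw : ∀ j, μ (J ⁻¹' {j}) = ENNReal.ofReal (samplingProb a j)) (i : ι) :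
    ∫ ω, importanceSample a (J ω) i ^ 2 ∂μ = |a i| * ∑ k, |a k| := by
  rw [integral_comp_eq_sum_of_measure_preimage_singleton hJ (samplingProb_nonneg a) hlaw
    fun j => importanceSample a j i ^ 2]
  simp [importanceSample, Pi.single_apply, samplingProb_mul_div_samplingProb_sq]

theorem memLp_importanceSample_apply (hJ : Measurable J) (i : ι) (p : ENNReal) :
    MemLp (fun ω => importanceSample a (J ω) i) p μ :=
  (MemLp.of_discrete (f := fun j => importanceSample a j i)).comp_of_map hJ.aemeasurable

variable {κ : Type*} [Fintype κ] [Nonempty κ] {J : κ → Ω → ι}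

theorem integral_avg_importanceSample (hJ : ∀ t, Measurable (J t))
    (hlaw : ∀ t j, μ (J t ⁻¹' {j}) = ENNReal.ofReal (samplingProb a j)) (i : ι) :
    ∫ ω, 1 / (Fintype.card κ : ℝ) * ∑ t, importanceSample a (J t ω) i ∂μ = a i :=
  integral_avg_of_integral_eq
    (fun t => (memLp_importanceSample_apply a (hJ t) i 1).integrable le_rfl)
    fun t => integral_importanceSample_apply a (hJ t) (hlaw t) i

theorem integral_avg_importanceSample_sq [IsProbabilityMeasure μ] (hJ : ∀ t, Measurable (J t))
    (hindep : Pairwise fun t s => IndepFun (J t) (J s) μ)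
    (hlaw : ∀ t j, μ (J t ⁻¹' {j}) = ENNReal.ofReal (samplingProb a j)) (i : ι) :
    ∫ ω, (1 / (Fintype.card κ : ℝ) * ∑ t, importanceSample a (J t ω) i) ^ 2 ∂μ =
      a i ^ 2 + (|a i| * ∑ k, |a k| - a i ^ 2) / Fintype.card κ :=
  integral_avg_sq_of_pairwise_indepFun (fun t => memLp_importanceSample_apply a (hJ t) i 2)
    (fun _ _ hts => (hindep hts).comp (φ := fun j => importanceSample a j i)
      (ψ := fun j => importanceSample a j i) .of_discrete .of_discrete)
    (fun t => integral_importanceSample_apply a (hJ t) (hlaw t) i)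
    (fun t => integral_importanceSample_apply_sq a (hJ t) (hlaw t) i)

end ImportanceSampling

/-- `c` i.i.d. importance samples of a vector `a` (index `j` with probability
`p_j = |a_j|/‖a‖₁`, value `(a_j/p_j) e_j`), averaged: the estimator `â` satisfies
`E[â] = a` and `E[‖â‖₂²] ≤ ‖a‖₂² (1 + s(a)/c)` where `s(a) = ‖a‖₁²/‖a‖₂²`. -/
theorem stmt_2 {d : ℕ} (a : Fin d → ℝ) (ha : a ≠ 0) (c : ℕ) (hc : 0 < c)
    {Ω : Type*} [MeasurableSpace Ω] (μ : Measure Ω) [IsProbabilityMeasure μ]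
    (J : Fin c → Ω → Fin d) (hJmeas : ∀ t, Measurable (J t))
    (hindep : iIndepFun J μ)
    (hdist : ∀ t j, μ {ω | J t ω = j} = ENNReal.ofReal (|a j| / ∑ i, |a i|))
    (ahat : Ω → Fin d → ℝ)
    (hahat : ∀ ω i, ahat ω i =
      (1 / c) * ∑ t, (if J t ω = i then a i / (|a i| / ∑ k, |a k|) else 0)) :
    (∀ i, ∫ ω, ahat ω i ∂μ = a i) ∧
      ∫ ω, ∑ i, (ahat ω i) ^ 2 ∂μ ≤
        (∑ i, (a i) ^ 2) * (1 + ((∑ i, |a i|) ^ 2 / ∑ i, (a i) ^ 2) / c) := by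
  have : Nonempty (Fin c) := ⟨⟨0, hc⟩⟩
  have hahat' : ∀ ω i, ahat ω i = 1 / (c : ℝ) * ∑ t, importanceSample a (J t ω) i := by
    intro ω i
    simp only [hahat, importanceSample_apply, samplingProb]
  have hmean (i : Fin d) : ∫ ω, ahat ω i ∂μ = a i := by
    simpa only [Fintype.card_fin, ← hahat'] using integral_avg_importanceSample a hJmeas hdist i
  have hsecond (i : Fin d) :
      ∫ ω, ahat ω i ^ 2 ∂μ = a i ^ 2 + (|a i| * ∑ k, |a k| - a i ^ 2) / c := by
    simpa only [Fintype.card_fin, ← hahat'] using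
      integral_avg_importanceSample_sq a hJmeas (fun _ _ h => hindep.indepFun h) hdist i
  have hsq_integrable (i : Fin d) : Integrable (fun ω => ahat ω i ^ 2) μ := by
    simp_rw [hahat']
    exact ((memLp_finsetSum _ fun t _ => memLp_importanceSample_apply a (hJmeas t) i 2).const_mul
      _).integrable_sq
  refine ⟨hmean, ?_⟩
  rw [integral_finsetSum _ fun i _ => hsq_integrable i, sum_congr rfl fun i _ => hsecond i]
  exact sum_second_moment_le ha c.cast_nonneg
end

section
/- Let a, x in R^d, c in [d], and let B = bot(a,c) be the complement of a set of c largest-magnitude indices of a. Let Y_1,...,Y_c be i.i.d. with P(Y = a_j x_j / p_j) = p_j = a_j^2 / ||a_bot||_2^2 for j in B (assume a_bot ≠ 0). Then the estimator Z = (a_top)^T x + (1/c) Σ_t Y_t satisfies E[Z] = a^T x and E[Z^2] ≤ (a^T x)^2 + (1/c) ||a_bot||_2^2 ||x||_2^2. -/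
/-!
Each sample `g (J t)`, with `g j = a j * x j / p j`, is unbiased for `a_botᵀx` because
`p j * g j = a j * x j` (both sides vanish when `a j = 0`), and its second moment
`∑ p j * g j ^ 2 = ‖a_bot‖² * ∑_{j ∈ B, a j ≠ 0} x j ^ 2` is at most `‖a_bot‖² ‖x‖²`.
By pairwise independence the average of the `c` samples has variance at most `‖a_bot‖² ‖x‖² / c`,
and `E[Z²] = (E Z)² + Var Z`.
-/

open MeasureTheory ProbabilityTheory Finset

section FiniteValued

variable {Ω α : Type*} [MeasurableSpace Ω] {μ : Measure Ω} [Fintype α] [MeasurableSpace α]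
  [DiscreteMeasurableSpace α] [DecidableEq α]

theorem integral_comp_eq_sum_compl [IsFiniteMeasure μ] {J : Ω → α} (hJ : Measurable J)
    {T : Finset α} (hJT : ∀ ω, J ω ∉ T) {q : α → ℝ} (hq : ∀ j ∉ T, 0 ≤ q j)
    (hlaw : ∀ j ∉ T, μ {ω | J ω = j} = ENNReal.ofReal (q j)) (h : α → ℝ) :
    ∫ ω, h (J ω) ∂μ = ∑ j ∈ Tᶜ, q j * h j := by
  rw [← integral_map hJ.aemeasurable .of_discrete, integral_fintype .of_finite,
    ← sum_add_sum_compl T, sum_eq_zero fun j hj => ?_, zero_add]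
  · refine sum_congr rfl fun j hj => ?_
    rw [smul_eq_mul, measureReal_def, Measure.map_apply hJ (measurableSet_singleton j)]
    simp only [Set.preimage, Set.mem_singleton_iff]
    rw [hlaw j (mem_compl.1 hj), ENNReal.toReal_ofReal (hq j (mem_compl.1 hj))]
  · have : J ⁻¹' {j} = ∅ := Set.eq_empty_of_forall_notMem fun ω hω => hJT ω (hω ▸ hj)
    simp [measureReal_def, Measure.map_apply hJ (measurableSet_singleton j), this]

end FiniteValued

section SampleMean

variable {Ω ι : Type*} [MeasurableSpace Ω] {μ : Measure Ω} [Fintype ι] {Y : ι → Ω → ℝ}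

theorem variance_average_le (hY : ∀ i, MemLp (Y i) 2 μ)
    (hind : Pairwise fun i j => Y i ⟂ᵢ[μ] Y j) {V : ℝ} (hV : ∀ i, Var[Y i; μ] ≤ V) :
    Var[fun ω => 1 / Fintype.card ι * ∑ i, Y i ω; μ] ≤ V / Fintype.card ι := by
  have hsum : Var[∑ i, Y i; μ] = ∑ i, Var[Y i; μ] :=
    IndepFun.variance_sum (fun i _ => hY i) fun i _ j _ hij => hind hij
  calc Var[fun ω => 1 / Fintype.card ι * ∑ i, Y i ω; μ]
      = (1 / Fintype.card ι) ^ 2 * Var[∑ i, Y i; μ] := by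
        rw [← variance_const_mul]; simp only [Finset.sum_apply]
    _ ≤ (1 / Fintype.card ι) ^ 2 * (Fintype.card ι * V) := by
        rw [hsum]
        gcongr
        simpa using sum_le_sum fun i (_ : i ∈ univ) => hV i
    _ = V / Fintype.card ι := by
        rcases eq_or_ne (Fintype.card ι : ℝ) 0 with h | h
        · simp [h]
        · field_simp

variable [IsProbabilityMeasure μ]

theorem integral_const_add_average [Nonempty ι] (hY : ∀ i, Integrable (Y i) μ) {b : ℝ}
    (hmean : ∀ i, μ[Y i] = b) (m : ℝ) :
    ∫ ω, m + 1 / Fintype.card ι * ∑ i, Y i ω ∂μ = m + b := by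
  rw [integral_add (integrable_const m) ((integrable_finsetSum _ fun i _ => hY i).const_mul _),
    integral_const_mul, integral_finsetSum _ fun i _ => hY i]
  simp [hmean]

theorem integral_sq_const_add_average_le [Nonempty ι] (hY : ∀ i, MemLp (Y i) 2 μ)
    (hind : Pairwise fun i j => Y i ⟂ᵢ[μ] Y j) {b V : ℝ} (hmean : ∀ i, μ[Y i] = b)
    (hsq : ∀ i, μ[Y i ^ 2] ≤ V) (m : ℝ) :
    ∫ ω, (m + 1 / Fintype.card ι * ∑ i, Y i ω) ^ 2 ∂μ ≤ (m + b) ^ 2 + V / Fintype.card ι := by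
  have hW : MemLp (fun ω => 1 / Fintype.card ι * ∑ i, Y i ω) 2 μ :=
    (memLp_finsetSum _ fun i _ => hY i).const_mul _
  have hvar := variance_eq_sub (X := fun ω => m + 1 / Fintype.card ι * ∑ i, Y i ω)
    ((memLp_const m).add hW)
  have hle := variance_average_le hY hind fun i =>
    (variance_le_expectation_sq (hY i).aestronglyMeasurable).trans (hsq i)
  rw [variance_const_add hW.aestronglyMeasurable,
    integral_const_add_average (fun i => (hY i).integrable one_le_two) hmean] at hvar
  simp only [Pi.pow_apply] at hvar
  linarith

end SampleMean

theorem sq_div_mul_mul_div_sq_div {a y S : ℝ} (h : a ^ 2 ≤ S) :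
    a ^ 2 / S * (a * y / (a ^ 2 / S)) = a * y := by
  rcases eq_or_ne a 0 with rfl | ha
  · simp
  have : 0 < S := (sq_pos_of_ne_zero ha).trans_le h
  field_simp

theorem sq_div_mul_mul_div_sq_div_sq_le {a y S : ℝ} (hS : 0 ≤ S) :
    a ^ 2 / S * (a * y / (a ^ 2 / S)) ^ 2 ≤ S * y ^ 2 := by
  rcases eq_or_ne a 0 with rfl | ha
  · simpa using mul_nonneg hS (sq_nonneg y)
  rcases hS.eq_or_lt with rfl | hS
  · simp
  exact le_of_eq (by field_simp)

theorem stmt_4_general {d : ℕ} (a x : Fin d → ℝ) (c : ℕ) (hc1 : 1 ≤ c)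
    (T : Finset (Fin d))
    {Ω : Type*} [MeasurableSpace Ω] (μ : Measure Ω) [IsProbabilityMeasure μ]
    (J : Fin c → Ω → Fin d) (hJmeas : ∀ t, Measurable (J t))
    (hindep : iIndepFun J μ)
    (hJrange : ∀ t ω, J t ω ∉ T)
    (hdist : ∀ t, ∀ j ∉ T, μ {ω | J t ω = j} =
      ENNReal.ofReal ((a j) ^ 2 / ∑ k ∈ Tᶜ, (a k) ^ 2))
    (Z : Ω → ℝ)
    (hZ : ∀ ω, Z ω = (∑ i ∈ T, a i * x i) +
      (1 / c) * ∑ t, a (J t ω) * x (J t ω) / ((a (J t ω)) ^ 2 / ∑ k ∈ Tᶜ, (a k) ^ 2)) :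
    (∫ ω, Z ω ∂μ = ∑ i, a i * x i) ∧
      ∫ ω, (Z ω) ^ 2 ∂μ ≤
        (∑ i, a i * x i) ^ 2 + (1 / c) * (∑ k ∈ Tᶜ, (a k) ^ 2) * ∑ i, (x i) ^ 2 := by
  set S := ∑ k ∈ Tᶜ, a k ^ 2
  have hS : 0 ≤ S := sum_nonneg fun k _ => sq_nonneg (a k)
  set g : Fin d → ℝ := fun j => a j * x j / (a j ^ 2 / S)
  have hg : Measurable g := .of_discrete
  have hlaw (t : Fin c) (h : Fin d → ℝ) : ∫ ω, h (J t ω) ∂μ = ∑ j ∈ Tᶜ, a j ^ 2 / S * h j :=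
    integral_comp_eq_sum_compl (hJmeas t) (hJrange t) (fun j _ => by positivity) (hdist t) h
  have hmean (t : Fin c) : ∫ ω, g (J t ω) ∂μ = ∑ j ∈ Tᶜ, a j * x j :=
    (hlaw t g).trans <| sum_congr rfl fun j hj =>
      sq_div_mul_mul_div_sq_div (single_le_sum (fun k _ => sq_nonneg (a k)) hj)
  have hsq (t : Fin c) : ∫ ω, g (J t ω) ^ 2 ∂μ ≤ S * ∑ i, x i ^ 2 := by
    rw [hlaw t (g · ^ 2), mul_sum]
    exact (sum_le_sum fun j _ => sq_div_mul_mul_div_sq_div_sq_le hS).trans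
      (sum_le_sum_of_subset_of_nonneg (subset_univ _) fun j _ _ => by positivity)
  have hmem (t : Fin c) : MemLp (fun ω => g (J t ω)) 2 μ :=
    (MemLp.of_discrete (f := g)).comp_of_map (hJmeas t).aemeasurable
  have hind : Pairwise fun s t => (fun ω => g (J s ω)) ⟂ᵢ[μ] fun ω => g (J t ω) :=
    fun s t hst => (hindep.indepFun hst).comp hg hg
  have : Nonempty (Fin c) := ⟨⟨0, hc1⟩⟩
  have hZ' : Z = fun ω => ∑ i ∈ T, a i * x i + 1 / Fintype.card (Fin c) * ∑ t, g (J t ω) := by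
    funext ω; rw [hZ, Fintype.card_fin]
  have hsplit : ∑ i ∈ T, a i * x i + ∑ j ∈ Tᶜ, a j * x j = ∑ i, a i * x i :=
    sum_add_sum_compl T _
  refine ⟨?_, ?_⟩
  · rw [hZ', integral_const_add_average (fun t => (hmem t).integrable one_le_two) hmean, hsplit]
  · have := integral_sq_const_add_average_le hmem hind hmean hsq (∑ i ∈ T, a i * x i)
    rw [hZ', ← hsplit]
    simpa [Fintype.card_fin, div_eq_inv_mul, mul_assoc] using this

/-- Dot product estimator: compute `a_topᵀx` exactly on the `c` largest-magnitude
coordinates `T`, and estimate `a_botᵀx` by averaging `c` i.i.d. importance samples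
(`j ∉ T` with probability `p_j = a_j²/‖a_bot‖₂²`, value `a_j x_j/p_j`). Then
`E[Z] = aᵀx` and `E[Z²] ≤ (aᵀx)² + (1/c)‖a_bot‖₂²‖x‖₂²`. -/
theorem stmt_4 {d : ℕ} (a x : Fin d → ℝ) (c : ℕ) (hc1 : 1 ≤ c) (hcd : c ≤ d)
    (T : Finset (Fin d)) (hT : T.card = c)
    (htop : ∀ i ∈ T, ∀ j ∉ T, |a j| ≤ |a i|)
    (hbot : ∃ j ∉ T, a j ≠ 0)
    {Ω : Type*} [MeasurableSpace Ω] (μ : Measure Ω) [IsProbabilityMeasure μ]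
    (J : Fin c → Ω → Fin d) (hJmeas : ∀ t, Measurable (J t))
    (hindep : iIndepFun J μ)
    (hJrange : ∀ t ω, J t ω ∉ T)
    (hdist : ∀ t, ∀ j ∉ T, μ {ω | J t ω = j} =
      ENNReal.ofReal ((a j) ^ 2 / ∑ k ∈ Tᶜ, (a k) ^ 2))
    (Z : Ω → ℝ)
    (hZ : ∀ ω, Z ω = (∑ i ∈ T, a i * x i) +
      (1 / c) * ∑ t, a (J t ω) * x (J t ω) / ((a (J t ω)) ^ 2 / ∑ k ∈ Tᶜ, (a k) ^ 2)) :
    (∫ ω, Z ω ∂μ = ∑ i, a i * x i) ∧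
      ∫ ω, (Z ω) ^ 2 ∂μ ≤
        (∑ i, a i * x i) ^ 2 + (1 / c) * (∑ k ∈ Tᶜ, (a k) ^ 2) * ∑ i, (x i) ^ 2 :=
  stmt_4_general a x c hc1 T μ J hJmeas hindep hJrange hdist Z hZ
end

section
/- Let A in R^{n×d} have rows a_1,...,a_n, let x in R^d, k > 0, c_i = sqrt(s_i)·k with s_i = s(a_i), M = Σ_i ||a_i||_2^2 (1 + s_i/c_i), and select row i with probability p_i = (||a_i||_2^2/M)(1 + s_i/c_i), then output G = (1/p_i) G_i where G_i is an independent unbiased estimator of a_i a_i^T x with E[||G_i||_2^2] ≤ ||a_i||_2^2(1+s_i/c_i)((a_i^T x)^2 + (s_i/c_i^2)||a_i||_2^2||x||_2^2). Then E[G] = A^T A x and E[||G||_2^2] ≤ M(||Ax||_2^2 + (1/k^2)||A||_F^2 ||x||_2^2). -/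
open MeasureTheory ProbabilityTheory Finset

/-! Since the sampled index `I` is independent of the row estimators, conditioning on `I` gives
`E[F(I, G)] = Σ_i P(I = i) E[F(i, G)]`. Taking `F(i, g) = g_i / p_i` yields
`E[G] = Σ_i E[G_i] = AᵀAx`, and taking `F(i, g) = ‖g_i / p_i‖²` yields
`E‖G‖² = Σ_i E‖G_i‖² / p_i`. The sampling probabilities are chosen so that
`‖a_i‖²(1 + s_i/c_i) / p_i = M` for every row, and `c_i = √s_i · k` makes `s_i / c_i² = 1/k²`;
summing the row bounds gives the claim. -/

lemma sum_sq_pos_of_ne_zero {ι : Type*} [Fintype ι] {a : ι → ℝ} (ha : a ≠ 0) :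
    0 < ∑ j, a j ^ 2 := by
  obtain ⟨j, hj⟩ := Function.ne_iff.mp ha
  exact sum_pos' (fun j _ => sq_nonneg _) ⟨j, mem_univ j, pow_two_pos_of_ne_zero hj⟩

lemma sum_abs_sq_div_sum_sq_pos {ι : Type*} [Fintype ι] {a : ι → ℝ} (ha : a ≠ 0) :
    0 < (∑ j, |a j|) ^ 2 / ∑ j, a j ^ 2 := by
  obtain ⟨j, hj⟩ := Function.ne_iff.mp ha
  have hl1 : 0 < ∑ j, |a j| := sum_pos' (fun j _ => abs_nonneg _) ⟨j, mem_univ j, abs_pos.mpr hj⟩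
  exact div_pos (pow_pos hl1 2) (sum_sq_pos_of_ne_zero ha)

lemma div_sq_sqrt_mul {s : ℝ} (hs : 0 < s) (k : ℝ) : s / (Real.sqrt s * k) ^ 2 = 1 / k ^ 2 := by
  rw [mul_pow, Real.sq_sqrt hs.le, div_mul_eq_div_div, div_self hs.ne']

namespace ProbabilityTheory

section ImportanceSampling

variable {Ω ι : Type*} [MeasurableSpace Ω] {μ : Measure Ω} [Fintype ι] [MeasurableSpace ι]
  [MeasurableSingletonClass ι] {I : Ω → ι}

lemma IndepFun.integral_comp_eq_sum_measureReal_mul {β : Type*} [MeasurableSpace β] {X : Ω → β}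
    (hIX : IndepFun I X μ) (hI : Measurable I) (hX : Measurable X) {F : ι → β → ℝ}
    (hF : ∀ i, Measurable (F i)) (hFX : ∀ i, Integrable (fun ω => F i (X ω)) μ) :
    ∫ ω, F (I ω) (X ω) ∂μ = ∑ i, μ.real (I ⁻¹' {i}) * ∫ ω, F i (X ω) ∂μ := by
  have hfiber : ∀ i, MeasurableSet (I ⁻¹' {i}) := fun i => hI (measurableSet_singleton i)
  have hon_fiber : ∀ i, Set.EqOn (fun ω => F (I ω) (X ω)) (fun ω => F i (X ω)) (I ⁻¹' {i}) :=
    fun i ω hω => congrArg (fun j => F j (X ω)) hω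
  have hcover : ⋃ i, I ⁻¹' {i} = Set.univ := by
    rw [← Set.preimage_iUnion, Set.iUnion_of_singleton, Set.preimage_univ]
  calc ∫ ω, F (I ω) (X ω) ∂μ = ∫ ω in ⋃ i, I ⁻¹' {i}, F (I ω) (X ω) ∂μ := by
        rw [hcover, setIntegral_univ]
    _ = ∑ i, ∫ ω in I ⁻¹' {i}, F i (X ω) ∂μ := by
        rw [integral_iUnion_fintype hfiber]
        · exact sum_congr rfl fun i _ => setIntegral_congr_fun (hfiber i) (hon_fiber i)
        · exact fun i j hij => Disjoint.preimage I (Set.disjoint_singleton.mpr hij)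
        · exact fun i => (hFX i).integrableOn.congr_fun (hon_fiber i).symm (hfiber i)
    _ = ∑ i, μ.real (I ⁻¹' {i}) * ∫ ω, F i (X ω) ∂μ := by
        refine sum_congr rfl fun i _ => ?_
        exact Indep.setIntegral_eq_mul hI.comap_le hIX hX.aemeasurable
          ⟨{i}, measurableSet_singleton i, rfl⟩ (hF i).aestronglyMeasurable

variable {κ : Type*} {G : Ω → ι → κ → ℝ} {p : ι → ℝ}

lemma IndepFun.integral_one_div_mul_eval_eq_sum (hIG : IndepFun I G μ) (hI : Measurable I)
    (hG : Measurable G) (hp : ∀ i, μ.real (I ⁻¹' {i}) = p i) (hp0 : ∀ i, p i ≠ 0)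
    (hGint : ∀ i j, Integrable (fun ω => G ω i j) μ) (j : κ) :
    ∫ ω, 1 / p (I ω) * G ω (I ω) j ∂μ = ∑ i, ∫ ω, G ω i j ∂μ := by
  rw [hIG.integral_comp_eq_sum_measureReal_mul hI hG (F := fun i g => 1 / p i * g i j)
    (by fun_prop) (fun i => (hGint i j).const_mul _)]
  refine sum_congr rfl fun i _ => ?_
  rw [hp, integral_const_mul, ← mul_assoc, mul_one_div_cancel (hp0 i), one_mul]

lemma IndepFun.integral_sum_sq_one_div_mul_eval_eq_sum [Fintype κ] (hIG : IndepFun I G μ)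
    (hI : Measurable I) (hG : Measurable G) (hp : ∀ i, μ.real (I ⁻¹' {i}) = p i)
    (hGint : ∀ i, Integrable (fun ω => ∑ j, G ω i j ^ 2) μ) :
    ∫ ω, ∑ j, (1 / p (I ω) * G ω (I ω) j) ^ 2 ∂μ = ∑ i, (∫ ω, ∑ j, G ω i j ^ 2 ∂μ) / p i := by
  have hscale : ∀ i ω, ∑ j, (1 / p i * G ω i j) ^ 2 = (1 / p i) ^ 2 * ∑ j, G ω i j ^ 2 :=
    fun i ω => by simp_rw [mul_pow, mul_sum]
  rw [hIG.integral_comp_eq_sum_measureReal_mul hI hG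
    (F := fun i g => ∑ j, (1 / p i * g i j) ^ 2) (by fun_prop)
    (fun i => by simpa only [hscale] using (hGint i).const_mul _)]
  refine sum_congr rfl fun i _ => ?_
  simp_rw [hp, hscale, integral_const_mul]
  rw [← mul_assoc, one_div_pow, mul_one_div, sq, div_self_mul_self', inv_mul_eq_div]

end ImportanceSampling

end ProbabilityTheory

theorem stmt_7_general {n d : ℕ} (A : Fin n → Fin d → ℝ) (hrows : ∀ i, A i ≠ 0)
    (x : Fin d → ℝ) (k : ℝ) (hk : 0 < k)
    (s : Fin n → ℝ) (hs : ∀ i, s i = (∑ j, |A i j|) ^ 2 / ∑ j, (A i j) ^ 2)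
    (c : Fin n → ℝ) (hc : ∀ i, c i = Real.sqrt (s i) * k)
    (M : ℝ) (hM : M = ∑ i, (∑ j, (A i j) ^ 2) * (1 + s i / c i))
    (p : Fin n → ℝ) (hp : ∀ i, p i = (∑ j, (A i j) ^ 2) * (1 + s i / c i) / M)
    {Ω : Type*} [MeasurableSpace Ω] (μ : Measure Ω)
    (I : Ω → Fin n) (hImeas : Measurable I)
    (hIdist : ∀ i, μ {ω | I ω = i} = ENNReal.ofReal (p i))
    (G : Ω → Fin n → Fin d → ℝ) (hGmeas : Measurable G)
    (hindep : IndepFun I G μ)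
    (hGint : ∀ i j, Integrable (fun ω => G ω i j) μ)
    (hGint2 : ∀ i, Integrable (fun ω => ∑ j, (G ω i j) ^ 2) μ)
    (hGmean : ∀ i j, ∫ ω, G ω i j ∂μ = A i j * ∑ l, A i l * x l)
    (hGsq : ∀ i, ∫ ω, ∑ j, (G ω i j) ^ 2 ∂μ ≤
      (∑ j, (A i j) ^ 2) * (1 + s i / c i) *
        ((∑ l, A i l * x l) ^ 2 +
          s i / (c i) ^ 2 * (∑ j, (A i j) ^ 2) * ∑ l, (x l) ^ 2)) :
    (∀ j, ∫ ω, (1 / p (I ω)) * G ω (I ω) j ∂μ = ∑ i, A i j * ∑ l, A i l * x l) ∧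
      ∫ ω, ∑ j, ((1 / p (I ω)) * G ω (I ω) j) ^ 2 ∂μ ≤
        M * ((∑ i, (∑ l, A i l * x l) ^ 2) +
          (1 / k ^ 2) * (∑ i, ∑ j, (A i j) ^ 2) * ∑ l, (x l) ^ 2) := by
  have hnorm : ∀ i, 0 < ∑ j, A i j ^ 2 := fun i => sum_sq_pos_of_ne_zero (hrows i)
  have hs_pos : ∀ i, 0 < s i := fun i => hs i ▸ sum_abs_sq_div_sum_sq_pos (hrows i)
  have hweight : ∀ i, 0 < (∑ j, A i j ^ 2) * (1 + s i / c i) := fun i => by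
    have := hs_pos i; have := hnorm i; rw [hc]; positivity
  have hp_pos : ∀ i, 0 < p i := fun i => by
    have hM_ge : (∑ j, A i j ^ 2) * (1 + s i / c i) ≤ M :=
      hM ▸ single_le_sum (fun i _ => (hweight i).le) (mem_univ i)
    rw [hp]; exact div_pos (hweight i) ((hweight i).trans_le hM_ge)
  have hprob : ∀ i, μ.real (I ⁻¹' {i}) = p i := fun i => by
    rw [measureReal_def, show I ⁻¹' {i} = {ω | I ω = i} from rfl, hIdist,
      ENNReal.toReal_ofReal (hp_pos i).le]
  refine ⟨fun j => ?_, ?_⟩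
  · rw [hindep.integral_one_div_mul_eval_eq_sum hImeas hGmeas hprob (fun i => (hp_pos i).ne') hGint]
    exact sum_congr rfl fun i _ => hGmean i j
  rw [hindep.integral_sum_sq_one_div_mul_eval_eq_sum hImeas hGmeas hprob hGint2]
  calc ∑ i, (∫ ω, ∑ j, G ω i j ^ 2 ∂μ) / p i
      ≤ ∑ i, (∑ j, A i j ^ 2) * (1 + s i / c i) * ((∑ l, A i l * x l) ^ 2 +
          s i / c i ^ 2 * (∑ j, A i j ^ 2) * ∑ l, x l ^ 2) / p i :=
        sum_le_sum fun i _ => div_le_div_of_nonneg_right (hGsq i) (hp_pos i).le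
    _ = ∑ i, M * ((∑ l, A i l * x l) ^ 2 + 1 / k ^ 2 * (∑ j, A i j ^ 2) * ∑ l, x l ^ 2) := by
        refine sum_congr rfl fun i _ => ?_
        rw [mul_div_right_comm, hp, div_div_cancel₀ (hweight i).ne', hc, div_sq_sqrt_mul (hs_pos i)]
    _ = M * ((∑ i, (∑ l, A i l * x l) ^ 2) +
          (1 / k ^ 2) * (∑ i, ∑ j, A i j ^ 2) * ∑ l, x l ^ 2) := by
        rw [← mul_sum, sum_add_distrib, ← sum_mul, ← mul_sum]

/-- Full matrix sampling estimator of `AᵀAx`: pick row `i` with probability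
`p_i = (‖a_i‖₂²/M)(1 + s_i/c_i)` where `c_i = √s_i · k` and
`M = Σ_i ‖a_i‖₂²(1 + s_i/c_i)`, independently of per-row unbiased estimators `G_i`
of `a_i a_iᵀ x` satisfying the rank-one second-moment bound; output `G = G_i/p_i`.
Then `E[G] = AᵀAx` and `E‖G‖₂² ≤ M(‖Ax‖₂² + (1/k²)‖A‖_F²‖x‖₂²)`. -/
theorem stmt_7 {n d : ℕ} (A : Fin n → Fin d → ℝ) (hrows : ∀ i, A i ≠ 0)
    (x : Fin d → ℝ) (k : ℝ) (hk : 0 < k)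
    (s : Fin n → ℝ) (hs : ∀ i, s i = (∑ j, |A i j|) ^ 2 / ∑ j, (A i j) ^ 2)
    (c : Fin n → ℝ) (hc : ∀ i, c i = Real.sqrt (s i) * k)
    (M : ℝ) (hM : M = ∑ i, (∑ j, (A i j) ^ 2) * (1 + s i / c i))
    (p : Fin n → ℝ) (hp : ∀ i, p i = (∑ j, (A i j) ^ 2) * (1 + s i / c i) / M)
    {Ω : Type*} [MeasurableSpace Ω] (μ : Measure Ω) [IsProbabilityMeasure μ]
    (I : Ω → Fin n) (hImeas : Measurable I)
    (hIdist : ∀ i, μ {ω | I ω = i} = ENNReal.ofReal (p i))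
    (G : Ω → Fin n → Fin d → ℝ) (hGmeas : Measurable G)
    (hindep : IndepFun I G μ)
    (hGint : ∀ i j, Integrable (fun ω => G ω i j) μ)
    (hGint2 : ∀ i, Integrable (fun ω => ∑ j, (G ω i j) ^ 2) μ)
    (hGmean : ∀ i j, ∫ ω, G ω i j ∂μ = A i j * ∑ l, A i l * x l)
    (hGsq : ∀ i, ∫ ω, ∑ j, (G ω i j) ^ 2 ∂μ ≤
      (∑ j, (A i j) ^ 2) * (1 + s i / c i) *
        ((∑ l, A i l * x l) ^ 2 +
          s i / (c i) ^ 2 * (∑ j, (A i j) ^ 2) * ∑ l, (x l) ^ 2)) :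
    (∀ j, ∫ ω, (1 / p (I ω)) * G ω (I ω) j ∂μ = ∑ i, A i j * ∑ l, A i l * x l) ∧
      ∫ ω, ∑ j, ((1 / p (I ω)) * G ω (I ω) j) ^ 2 ∂μ ≤
        M * ((∑ i, (∑ l, A i l * x l) ^ 2) +
          (1 / k ^ 2) * (∑ i, ∑ j, (A i j) ^ 2) * ∑ l, (x l) ^ 2) :=
  stmt_7_general A hrows x k hk s hs c hc M hM p hp μ I hImeas hIdist G hGmeas hindep hGint hGint2
    hGmean hGsq
end

section
/- Let f(x) = (1/2)||Ax - b||_2^2 with minimizer x*, let μ = λ_min(A^T A) > 0 and κ = ||A||_F^2/μ, and let G be an unbiased estimator of A^T A x with E||G(x)||_2^2 ≤ M(||Ax||_2^2 + (1/k^2)||A||_F^2||x||_2^2) where k = sqrt(κ), using shared randomness at x and x*. Then ∇g(x) = G(x) (minus the deterministic A^T b term) satisfies E[||∇g(x) - ∇g(x*)||_2^2] ≤ 2M·2(f(x) - f(x*)), i.e., variance parameter σ^2 = 2M in the SVRG framework. -/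
open MeasureTheory Matrix Finset

set_option maxHeartbeats 1600000 in
/-- Variance bound for regression: for `f(x) = (1/2)‖Ax - b‖²` with minimizer `x*`,
`μ = λ_min(AᵀA) > 0`, `κ = ‖A‖_F²/μ`, and a linear unbiased estimator `G` of `AᵀAx`
with `E‖G(y)‖² ≤ M(‖Ay‖² + (1/k²)‖A‖_F²‖y‖²)` where `k = √κ` and the same randomness
at `x` and `x*`, the gradient estimator `∇g(x) = G(x)` (up to the deterministic
`Aᵀb` term) satisfies `E‖∇g(x) - ∇g(x*)‖² ≤ 2M · 2(f(x) - f(x*))`. -/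
theorem stmt_13 {n d : ℕ} (A : Matrix (Fin n) (Fin d) ℝ) (b : Fin n → ℝ)
    (mu kappa M k : ℝ) (hmu : 0 < mu)
    (hmulb : ∀ y : Fin d → ℝ, mu * ∑ j, (y j) ^ 2 ≤ ∑ i, (A.mulVec y i) ^ 2)
    (hkappa : kappa = (∑ i, ∑ j, (A i j) ^ 2) / mu)
    (hk : k = Real.sqrt kappa)
    (f : (Fin d → ℝ) → ℝ)
    (hf : ∀ x, f x = (1 / 2) * ∑ i, (A.mulVec x i - b i) ^ 2)
    (xstar : Fin d → ℝ) (hmin : ∀ y, f xstar ≤ f y)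
    {Ω : Type*} [MeasurableSpace Ω] (μ : Measure Ω) [IsProbabilityMeasure μ]
    (G : Ω → (Fin d → ℝ) → (Fin d → ℝ))
    (hGlin : ∀ ω, IsLinearMap ℝ (G ω))
    (hGint2 : ∀ y, Integrable (fun ω => ∑ j, (G ω y j) ^ 2) μ)
    (hGmean : ∀ y j, ∫ ω, G ω y j ∂μ = (Aᵀ * A).mulVec y j)
    (hGsq : ∀ y : Fin d → ℝ, ∫ ω, ∑ j, (G ω y j) ^ 2 ∂μ ≤
      M * (∑ i, (A.mulVec y i) ^ 2 +
        (1 / k ^ 2) * (∑ i, ∑ j, (A i j) ^ 2) * ∑ j, (y j) ^ 2)) :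
    ∀ x : Fin d → ℝ,
      ∫ ω, ∑ j, (G ω (x - xstar) j) ^ 2 ∂μ ≤ 2 * M * (2 * (f x - f xstar)) := by
  intro x
  set F : ℝ := ∑ i, ∑ j, (A i j) ^ 2 with hFdef
  set v : Fin d → ℝ := x - xstar with hv
  set a : ℝ := ∑ i, (A.mulVec v i) ^ 2 with ha
  set c : ℝ := ∑ i, (A.mulVec v i) * (A.mulVec xstar i - b i) with hcdef
  have hF : (0:ℝ) ≤ F := by positivity
  have hanneg : (0:ℝ) ≤ a := by positivity
  have hk2 : k ^ 2 = F / mu := by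
    rw [hk, Real.sq_sqrt (by rw [hkappa]; positivity), hkappa]
  have hT : (1 / k ^ 2) * F ≤ mu := by
    rcases eq_or_lt_of_le hF with h0 | h0
    · rw [← h0, mul_zero]; exact hmu.le
    · rw [hk2, one_div_div, div_mul_cancel₀ _ (ne_of_gt h0)]
  have hvn : (0:ℝ) ≤ ∑ j, (v j) ^ 2 := by positivity
  have hTa : (1 / k ^ 2) * F * ∑ j, (v j) ^ 2 ≤ a := by
    have h1 : (1 / k ^ 2) * F * ∑ j, (v j) ^ 2 ≤ mu * ∑ j, (v j) ^ 2 :=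
      mul_le_mul_of_nonneg_right hT hvn
    exact h1.trans (hmulb v)
  have hTnn : (0:ℝ) ≤ (1 / k ^ 2) * F * ∑ j, (v j) ^ 2 := by positivity
  -- expansion of f along xstar + t • v
  have hmv : ∀ (t : ℝ) (i : Fin n),
      A.mulVec (xstar + t • v) i = A.mulVec xstar i + t * A.mulVec v i := by
    intro t i
    rw [Matrix.mulVec_add, Matrix.mulVec_smul]
    simp [smul_eq_mul]
  have hfe : ∀ t : ℝ, f (xstar + t • v) = f xstar + t ^ 2 / 2 * a + t * c := by
    intro t
    rw [hf, hf xstar]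
    have hcong : ∀ i ∈ Finset.univ, (A.mulVec (xstar + t • v) i - b i) ^ 2 =
        (A.mulVec xstar i - b i) ^ 2 + t ^ 2 * (A.mulVec v i) ^ 2 +
          (2 * t) * ((A.mulVec v i) * (A.mulVec xstar i - b i)) := by
      intro i _
      rw [hmv t i]; ring
    rw [Finset.sum_congr rfl hcong, Finset.sum_add_distrib, Finset.sum_add_distrib,
      ← Finset.mul_sum, ← Finset.mul_sum, ← ha, ← hcdef]
    ring
  have hq : ∀ t : ℝ, 0 ≤ t ^ 2 / 2 * a + t * c := by
    intro t
    have := hmin (xstar + t • v)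
    rw [hfe t] at this
    linarith
  have hc0 : c = 0 := by
    rcases eq_or_lt_of_le hanneg with h0 | h0
    · have h1 := hq 1
      have h2 := hq (-1)
      nlinarith [h1, h2]
    · have h := hq (-c / a)
      have key : (-c / a) ^ 2 / 2 * a + (-c / a) * c = -(c ^ 2 / (2 * a)) := by
        field_simp
        ring
      rw [key] at h
      have hc2 : c ^ 2 ≤ 0 := by
        have h' : c ^ 2 / (2 * a) ≤ 0 := by linarith
        have h2 : c ^ 2 / (2 * a) * (2 * a) ≤ 0 :=
          mul_nonpos_of_nonpos_of_nonneg h' (by linarith)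
        have h3 : c ^ 2 / (2 * a) * (2 * a) = c ^ 2 := by field_simp
        linarith [h3 ▸ h2]
      exact pow_eq_zero_iff (two_ne_zero) |>.mp (le_antisymm hc2 (sq_nonneg c))
  have hxv : xstar + (1 : ℝ) • v = x := by
    funext j
    simp [hv]
  have hfx : 2 * (f x - f xstar) = a := by
    have h1 := hfe 1
    rw [hxv] at h1
    rw [h1, hc0]; ring
  have hMaT : 0 ≤ M * (a - (1 / k ^ 2) * F * ∑ j, (v j) ^ 2) := by
    rcases Nat.eq_zero_or_pos d with hd | hd
    · subst hd
      have hva : a = 0 := by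
        simp [ha, Matrix.mulVec, dotProduct]
      have hvs : (∑ j, (v j) ^ 2 : ℝ) = 0 := by simp
      rw [hva, hvs]
      simp
    · have hM : 0 ≤ M := by
        obtain ⟨j0⟩ := Fin.pos_iff_nonempty.mp hd
        have hys : ∑ j, ((Pi.single j0 1 : Fin d → ℝ) j) ^ 2 = 1 := by
          simp [Pi.single_apply, ite_pow]
        have hmul := hmulb (Pi.single j0 1)
        rw [hys, mul_one] at hmul
        have hint : 0 ≤ ∫ ω, ∑ j, (G ω (Pi.single j0 1) j) ^ 2 ∂μ :=
          integral_nonneg fun ω => by positivity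
        have hS := hGsq (Pi.single j0 1)
        rw [hys, mul_one] at hS
        have hFy : (0:ℝ) ≤ 1 / k ^ 2 * F := by positivity
        have hSpos : 0 < ∑ i, (A.mulVec (Pi.single j0 1) i) ^ 2 + 1 / k ^ 2 * F := by
          linarith
        nlinarith [hint.trans hS, hSpos]
      have : 0 ≤ a - (1 / k ^ 2) * F * ∑ j, (v j) ^ 2 := by linarith
      exact mul_nonneg hM this
  calc ∫ ω, ∑ j, (G ω v j) ^ 2 ∂μ
      ≤ M * (a + (1 / k ^ 2) * F * ∑ j, (v j) ^ 2) := hGsq v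
    _ ≤ 2 * M * (2 * (f x - f xstar)) := by
        rw [hfx]
        nlinarith [hMaT]
end
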